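/- arXiv:1706.01993 — 3 statements merged into one kernel-verified Lean document; each statement's English description precedes it below -/
import Mathlib

section
/- Let τ be a σ-finite measure on a measure space X and let b_1,…,b_d ∈ L²(τ) satisfy ∑_{k=1}^d |b_k| ≠ 0 τ-almost everywhere. Then for Lebesgue-almost every α = (α_1,…,α_d) ∈ ℂ^d, the function ∑_{k=1}^d α_k b_k is nonzero τ-almost everywhere on X. -/
/-!
For fixed `x` with `b(x) ≠ 0`, the set of `α` with `∑ α_k b_k(x) = 0` is a complex hyperplane,
hence Lebesgue-null. After replacing the `b_k` by measurable representatives, the set of pairs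
`(x, α)` where the combination vanishes is measurable, so Tonelli lets us exchange
"for a.e. `x`, for a.e. `α`" with "for a.e. `α`, for a.e. `x`".
-/

open MeasureTheory

theorem addHaar_ker_eq_zero {E : Type*} [NormedAddCommGroup E] [NormedSpace ℂ E]
    [MeasurableSpace E] [BorelSpace E] [FiniteDimensional ℂ E] (μ : Measure E)
    [μ.IsAddHaarMeasure] {f : E →ₗ[ℂ] ℂ} (hf : f ≠ 0) : μ (LinearMap.ker f) = 0 := by
  refine Measure.addHaar_submodule μ ((LinearMap.ker f).restrictScalars ℝ) ?_
  rwa [Ne, Submodule.restrictScalars_eq_top_iff, LinearMap.ker_eq_top]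

theorem volume_setOf_sum_mul_eq_zero {ι : Type*} [Fintype ι] {c : ι → ℂ} (hc : c ≠ 0) :
    volume {α : ι → ℂ | ∑ k, α k * c k = 0} = 0 := by
  classical
  have hL : Fintype.linearCombination ℂ c ≠ 0 := by
    obtain ⟨k, hk⟩ := Function.ne_iff.mp hc
    exact fun h => hk (by simpa [h] using (Fintype.linearCombination_apply_single ℂ c k 1).symm)
  convert addHaar_ker_eq_zero volume hL using 2
  ext α
  simp [Fintype.linearCombination_apply]

theorem ae_ae_sum_mul_ne_zero {X ι : Type*} [Fintype ι] [MeasurableSpace X] {τ : Measure X}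
    [SFinite τ] {g : ι → X → ℂ} (hg : ∀ k, Measurable (g k)) (hne : ∀ᵐ x ∂τ, (g · x) ≠ 0) :
    ∀ᵐ α ∂(volume : Measure (ι → ℂ)), ∀ᵐ x ∂τ, ∑ k, α k * g k x ≠ 0 := by
  have hmeas : MeasurableSet {p : X × (ι → ℂ) | ∑ k, p.2 k * g k p.1 ≠ 0} :=
    (measurableSet_singleton 0).compl.preimage (by fun_prop)
  refine (Measure.ae_ae_comm hmeas).mp ?_
  filter_upwards [hne] with x hx
  exact measure_mono_null (fun α hα => by simpa using hα) (volume_setOf_sum_mul_eq_zero hx)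

theorem ae_ae_sum_mul_ne_zero_of_aemeasurable {X ι : Type*} [Fintype ι] [MeasurableSpace X]
    {τ : Measure X} [SFinite τ] {b : ι → X → ℂ} (hb : ∀ k, AEMeasurable (b k) τ)
    (hne : ∀ᵐ x ∂τ, (b · x) ≠ 0) :
    ∀ᵐ α ∂(volume : Measure (ι → ℂ)), ∀ᵐ x ∂τ, ∑ k, α k * b k x ≠ 0 := by
  have hbg : ∀ᵐ x ∂τ, ∀ k, b k x = (hb k).mk _ x := ae_all_iff.mpr fun k => (hb k).ae_eq_mk
  have hne' : ∀ᵐ x ∂τ, (fun k => (hb k).mk _ x) ≠ 0 := by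
    filter_upwards [hne, hbg] with x hx hx'
    simpa only [← hx'] using hx
  filter_upwards [ae_ae_sum_mul_ne_zero (fun k => (hb k).measurable_mk) hne'] with α hα
  filter_upwards [hα, hbg] with x hx hx'
  simpa only [hx'] using hx

open MeasureTheory in
/-- If `b_1, …, b_d ∈ L²(τ)` (τ σ-finite) satisfy `∑ |b_k| ≠ 0` τ-a.e., then for
Lebesgue-almost every `α ∈ ℂ^d` the combination `∑ α_k b_k` is nonzero τ-a.e. -/
theorem stmt7 {X : Type*} [MeasurableSpace X] (τ : Measure X) [SigmaFinite τ]
    (d : ℕ) (b : Fin d → X → ℂ)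
    (hb2 : ∀ k, MemLp (b k) 2 τ)
    (hne : ∀ᵐ x ∂τ, ∑ k, ‖b k x‖ ≠ 0) :
    ∀ᵐ α ∂(volume : Measure (Fin d → ℂ)),
      ∀ᵐ x ∂τ, ∑ k, α k * b k x ≠ 0 := by
  refine ae_ae_sum_mul_ne_zero_of_aemeasurable
    (fun k => (hb2 k).aestronglyMeasurable.aemeasurable) ?_
  filter_upwards [hne] with x hx h
  exact hx (by simp [funext_iff.mp h])
end

section
/- Let U be unitary on H, B : ℂ^d → H an isometry with star-cyclic range (i.e. the closed span of {U^k Ran B : k ∈ ℤ} is H), and Γ a strict contraction on ℂ^d. Then T = U + B(Γ - I)B*U is a completely non-unitary contraction: there is no nonzero reducing subspace of T on which T acts unitarily. -/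
/-!
Write `D x = B* U x`. Since `B` is an isometry, `B B*` is the orthogonal projection onto `ran B`,
and `T x = (1 - B B*) U x + B Γ D x` is an orthogonal decomposition, so Pythagoras gives the
defect identity `‖x‖² - ‖T x‖² = ‖D x‖² - ‖Γ D x‖²`. Hence `T` is a contraction, and `‖T x‖ = ‖x‖`
forces `D x = 0` because `Γ` is a strict contraction. On a reducing subspace `G` where `T` is
unitary this gives `T = U` on `G`, so `G` reduces `U` and is orthogonal to `ran B`; then `Gᗮ`
contains `U^n (ran B)` and `U*^n (ran B)` for all `n`, and star-cyclicity forces `Gᗮ = H`.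
-/

open ContinuousLinearMap Module.End Submodule

theorem eq_zero_of_norm_le_norm_apply_of_norm_lt_one {𝕜 F : Type*} [NontriviallyNormedField 𝕜]
    [NormedAddCommGroup F] [NormedSpace 𝕜 F] {A : F →L[𝕜] F} (hA : ‖A‖ < 1) {v : F}
    (hv : ‖v‖ ≤ ‖A v‖) : v = 0 := by
  by_contra hv0
  have hpos : 0 < ‖v‖ := norm_pos_iff.mpr hv0
  have hlt : ‖A v‖ < ‖v‖ :=
    calc ‖A v‖ ≤ ‖A‖ * ‖v‖ := le_opNorm A v
      _ < 1 * ‖v‖ := mul_lt_mul_of_pos_right hA hpos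
      _ = ‖v‖ := one_mul _
  exact hlt.not_ge hv

theorem map_pow_le_of_mem_invtSubmodule {R M : Type*} [Semiring R] [AddCommMonoid M] [Module R M]
    {f : Module.End R M} {p q : Submodule R M} (hq : q ∈ invtSubmodule f) (hpq : p ≤ q) (n : ℕ) :
    p.map (f ^ n) ≤ q := by
  rintro _ ⟨x, hx, rfl⟩
  exact pow_apply_mem_of_forall_mem n hq x (hpq hx)

section

variable {𝕜 E H : Type*} [RCLike 𝕜]
  [NormedAddCommGroup E] [InnerProductSpace 𝕜 E] [CompleteSpace E]
  [NormedAddCommGroup H] [InnerProductSpace 𝕜 H] [CompleteSpace H]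

theorem adjoint_apply_apply_of_norm_map {B : E →L[𝕜] H} (hB : ∀ v, ‖B v‖ = ‖v‖) (v : E) :
    adjoint B (B v) = v := by
  rw [← comp_apply, (norm_map_iff_adjoint_comp_self B).mp hB, one_apply_eq_self]

theorem norm_sq_sub_add_of_norm_map {B : E →L[𝕜] H} (hB : ∀ v, ‖B v‖ = ‖v‖) (y : H) (w : E) :
    ‖y - B (adjoint B y) + B w‖ ^ 2 = ‖y - B (adjoint B y)‖ ^ 2 + ‖w‖ ^ 2 := by
  have horth : inner 𝕜 (y - B (adjoint B y)) (B w) = 0 := by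
    rw [← adjoint_inner_left, map_sub, adjoint_apply_apply_of_norm_map hB, sub_self,
      inner_zero_left]
  simpa only [sq, hB] using norm_add_sq_eq_norm_sq_add_norm_sq_of_inner_eq_zero _ _ horth

/-- Agrees with `U` on `U⁻¹ (ran B)ᗮ` and with `B Γ B* U` on `U⁻¹ (ran B)`. -/
noncomputable def perturbOnRange (U : H →L[𝕜] H) (B : E →L[𝕜] H) (Γ : E →L[𝕜] E) : H →L[𝕜] H :=
  U + B ∘L (Γ - 1) ∘L adjoint B ∘L U

variable {U : H →L[𝕜] H} {B : E →L[𝕜] H} {Γ : E →L[𝕜] E}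

theorem perturbOnRange_apply (x : H) :
    perturbOnRange U B Γ x = U x - B (adjoint B (U x)) + B (Γ (adjoint B (U x))) := by
  simp only [perturbOnRange, add_apply, coe_comp, Function.comp_apply, sub_apply, map_sub]
  abel

theorem perturbOnRange_apply_of_adjoint_apply_eq_zero {x : H} (hx : adjoint B (U x) = 0) :
    perturbOnRange U B Γ x = U x := by
  simp [perturbOnRange_apply, hx]

theorem norm_sq_perturbOnRange_apply (hU : ∀ x, ‖U x‖ = ‖x‖) (hB : ∀ v, ‖B v‖ = ‖v‖) (x : H) :
    ‖perturbOnRange U B Γ x‖ ^ 2 + ‖adjoint B (U x)‖ ^ 2 =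
      ‖x‖ ^ 2 + ‖Γ (adjoint B (U x))‖ ^ 2 := by
  have hx := norm_sq_sub_add_of_norm_map hB (U x) (adjoint B (U x))
  rw [sub_add_cancel, hU] at hx
  rw [perturbOnRange_apply, norm_sq_sub_add_of_norm_map hB, hx]
  ring

theorem norm_perturbOnRange_le_one (hU : ∀ x, ‖U x‖ = ‖x‖) (hB : ∀ v, ‖B v‖ = ‖v‖)
    (hΓ : ‖Γ‖ ≤ 1) : ‖perturbOnRange U B Γ‖ ≤ 1 := by
  refine opNorm_le_bound _ zero_le_one fun x => ?_
  have hΓx : ‖Γ (adjoint B (U x))‖ ≤ ‖adjoint B (U x)‖ :=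
    (le_opNorm _ _).trans (mul_le_of_le_one_left (norm_nonneg _) hΓ)
  have hsq : ‖perturbOnRange U B Γ x‖ ^ 2 ≤ ‖x‖ ^ 2 := by
    linarith [norm_sq_perturbOnRange_apply (Γ := Γ) hU hB x,
      pow_le_pow_left₀ (norm_nonneg _) hΓx 2]
  rw [one_mul]
  exact (pow_le_pow_iff_left₀ (norm_nonneg _) (norm_nonneg _) two_ne_zero).mp hsq

theorem adjoint_apply_eq_zero_of_norm_perturbOnRange_apply (hU : ∀ x, ‖U x‖ = ‖x‖)
    (hB : ∀ v, ‖B v‖ = ‖v‖) (hΓ : ‖Γ‖ < 1) {x : H} (hx : ‖perturbOnRange U B Γ x‖ = ‖x‖) :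
    adjoint B (U x) = 0 := by
  refine eq_zero_of_norm_le_norm_apply_of_norm_lt_one hΓ ?_
  have hsq := norm_sq_perturbOnRange_apply (Γ := Γ) hU hB x
  rw [hx, add_right_inj] at hsq
  exact ((sq_eq_sq₀ (norm_nonneg _) (norm_nonneg _)).mp hsq).le

theorem eq_bot_of_mem_invtSubmodule_of_le_ker
    (hcyc : (⨆ n : ℕ,
      (LinearMap.range (B : E →ₗ[𝕜] H)).map ((U ^ n : H →L[𝕜] H) : H →ₗ[𝕜] H) ⊔
      (LinearMap.range (B : E →ₗ[𝕜] H)).map ((adjoint U ^ n : H →L[𝕜] H) : H →ₗ[𝕜] H)).topologicalClosure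
        = ⊤)
    {G : Submodule 𝕜 H} (hU : G ∈ invtSubmodule (U : H →ₗ[𝕜] H))
    (hU' : G ∈ invtSubmodule (adjoint U : H →ₗ[𝕜] H))
    (hB : G ≤ LinearMap.ker (adjoint B : H →ₗ[𝕜] E)) : G = ⊥ := by
  have hUperp : Gᗮ ∈ invtSubmodule (U : H →ₗ[𝕜] H) := orthogonal_mem_invtSubmodule hU'
  have hU'perp : Gᗮ ∈ invtSubmodule (adjoint U : H →ₗ[𝕜] H) :=
    orthogonal_mem_invtSubmodule (by rwa [adjoint_adjoint])
  have hran : LinearMap.range (B : E →ₗ[𝕜] H) ≤ Gᗮ := by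
    rw [← orthogonal_range] at hB
    exact (le_orthogonal_orthogonal _).trans (orthogonal_le hB)
  have hspan := iSup_le fun n => sup_le
    (toLinearMap_pow U n ▸ map_pow_le_of_mem_invtSubmodule hUperp hran n)
    (toLinearMap_pow (adjoint U) n ▸ map_pow_le_of_mem_invtSubmodule hU'perp hran n)
  rw [← orthogonal_eq_top_iff, eq_top_iff, ← hcyc]
  exact topologicalClosure_minimal _ hspan G.isClosed_orthogonal

end

open ContinuousLinearMap in
/-- If `Ran B` is star-cyclic for the unitary `U` and `Γ` is a strict contraction, then
`T = U + B(Γ - I)B*U` is a completely non-unitary contraction: `‖T‖ ≤ 1` and every closed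
reducing subspace `G` on which `T` acts unitarily is trivial. -/
theorem stmt10 {H : Type*} [NormedAddCommGroup H] [InnerProductSpace ℂ H] [CompleteSpace H]
    {d : ℕ} (U : H →L[ℂ] H) (hU1 : adjoint U * U = 1) (hU2 : U * adjoint U = 1)
    (B : EuclideanSpace ℂ (Fin d) →L[ℂ] H) (hBiso : ∀ v, ‖B v‖ = ‖v‖)
    (hcyc : (⨆ n : ℕ, (LinearMap.range (B : EuclideanSpace ℂ (Fin d) →ₗ[ℂ] H)).map ((U ^ n : H →L[ℂ] H) : H →ₗ[ℂ] H) ⊔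
        (LinearMap.range (B : EuclideanSpace ℂ (Fin d) →ₗ[ℂ] H)).map (((adjoint U) ^ n : H →L[ℂ] H) : H →ₗ[ℂ] H)).topologicalClosure = ⊤)
    (Γ : EuclideanSpace ℂ (Fin d) →L[ℂ] EuclideanSpace ℂ (Fin d)) (hΓ : ‖Γ‖ < 1) :
    let T := U + B ∘L (Γ - 1) ∘L adjoint B ∘L U
    ‖T‖ ≤ 1 ∧
    ∀ G : Submodule ℂ H, IsClosed (G : Set H) →
      (∀ x ∈ G, T x ∈ G) → (∀ x ∈ Gᗮ, T x ∈ Gᗮ) →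
      (∀ x ∈ G, ‖T x‖ = ‖x‖) → (∀ y ∈ G, ∃ x ∈ G, T x = y) → G = ⊥ := by
  intro T
  have hU : ∀ x, ‖U x‖ = ‖x‖ := (norm_map_iff_adjoint_comp_self U).mpr hU1
  have hU'U : ∀ x, adjoint U (U x) = x := fun x => by
    rw [← mul_apply_eq_comp, hU1, one_apply_eq_self]
  have hUU' : ∀ y, U (adjoint U y) = y := fun y => by
    rw [← mul_apply_eq_comp, hU2, one_apply_eq_self]
  refine ⟨norm_perturbOnRange_le_one hU hBiso hΓ.le, fun G _ hTG _ hiso hsurj => ?_⟩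
  have hBU : ∀ x ∈ G, adjoint B (U x) = 0 := fun x hx =>
    adjoint_apply_eq_zero_of_norm_perturbOnRange_apply hU hBiso hΓ (hiso x hx)
  have hTU : ∀ x ∈ G, T x = U x := fun x hx =>
    perturbOnRange_apply_of_adjoint_apply_eq_zero (hBU x hx)
  have hUG : G ∈ invtSubmodule (U : H →ₗ[ℂ] H) :=
    (mem_invtSubmodule_iff_forall_mem_of_mem _).mpr fun x hx => hTU x hx ▸ hTG x hx
  have hU'G : G ∈ invtSubmodule (adjoint U : H →ₗ[ℂ] H) := by
    refine (mem_invtSubmodule_iff_forall_mem_of_mem _).mpr fun y hy => ?_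
    obtain ⟨x, hx, rfl⟩ := hsurj y hy
    rwa [hTU x hx, coe_coe, hU'U]
  refine eq_bot_of_mem_invtSubmodule_of_le_ker hcyc hUG hU'G fun y hy => ?_
  have hy' := hBU _ (hU'G hy)
  rwa [coe_coe, hUU'] at hy'
end

section
/- Let Γ be a strict d×d contraction and θ a d×d matrix with I + θΓ* invertible, and let θ_0 = D_{Γ*}(I + θΓ*)^{-1}(θ + Γ)D_Γ^{-1}. Then the identity D_{Γ*}^{-1}(I-Γ) + θD_Γ^{-1}(Γ*-I) = (I + θΓ*)D_{Γ*}^{-1}(I - θ_0) holds. -/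
set_option synthInstance.maxHeartbeats 400000
set_option maxHeartbeats 1000000

/-- The defect operator `D_A = (I - A*A)^{1/2}` of an operator `A` on `ℂ^d`. -/
noncomputable def defectOp {d : ℕ}
    (A : EuclideanSpace ℂ (Fin d) →L[ℂ] EuclideanSpace ℂ (Fin d)) :
    EuclideanSpace ℂ (Fin d) →L[ℂ] EuclideanSpace ℂ (Fin d) :=
  CFC.sqrt (1 - ContinuousLinearMap.adjoint A * A)

section Aux

variable {d : ℕ}

local notation "E" => EuclideanSpace ℂ (Fin d)

/-- The algebra of continuous linear maps on a finite-dimensional space is isomorphic to the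
algebra of linear maps. -/
noncomputable def clmAlgEquiv :
    (EuclideanSpace ℂ (Fin d) →L[ℂ] EuclideanSpace ℂ (Fin d)) ≃ₐ[ℂ]
      Module.End ℂ (EuclideanSpace ℂ (Fin d)) :=
  AlgEquiv.ofLinearEquiv LinearMap.toContinuousLinearMap.symm rfl (fun _ _ => rfl)

lemma finite_real_spectrum (b : E →L[ℂ] E) : (spectrum ℝ b).Finite := by
  have h1 : (spectrum ℂ b).Finite := by
    rw [← AlgEquiv.spectrum_eq (clmAlgEquiv (d := d)) b]
    exact Module.End.finite_spectrum _
  have h2 : algebraMap ℝ ℂ ⁻¹' spectrum ℂ b = spectrum ℝ b :=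
    spectrum.preimage_algebraMap ℂ
  rw [← h2]
  exact h1.preimage (fun x _ y _ h => by exact_mod_cast h)

lemma semiconj_pow {A : Type*} [Ring A] {x b c : A} (h : x * b = c * x) (n : ℕ) :
    x * b ^ n = c ^ n * x := by
  induction n with
  | zero => simp
  | succ n ih =>
    rw [pow_succ, ← mul_assoc, ih, mul_assoc, h, pow_succ, mul_assoc]

lemma semiconj_aeval {A : Type*} [Ring A] [Algebra ℝ A] {x b c : A} (h : x * b = c * x)
    (p : Polynomial ℝ) : x * Polynomial.aeval b p = Polynomial.aeval c p * x := by
  induction p using Polynomial.induction_on' with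
  | add p q hp hq => simp [mul_add, add_mul, hp, hq]
  | monomial n r =>
    simp only [Polynomial.aeval_monomial]
    calc x * (algebraMap ℝ A r * b ^ n) = algebraMap ℝ A r * (x * b ^ n) := by
          rw [← mul_assoc, ← Algebra.commutes r x, mul_assoc]
      _ = algebraMap ℝ A r * (c ^ n * x) := by rw [semiconj_pow h n]
      _ = algebraMap ℝ A r * c ^ n * x := by rw [mul_assoc]

lemma semiconj_sqrt {x b c : E →L[ℂ] E} (hb : 0 ≤ b) (hc : 0 ≤ c) (h : x * b = c * x) :
    x * CFC.sqrt b = CFC.sqrt c * x := by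
  have hfb := finite_real_spectrum b
  have hfc := finite_real_spectrum c
  set f : ℝ → ℝ := fun t => ((Real.toNNReal t).sqrt : ℝ) with hf
  set s := (hfb.union hfc).toFinset with hs
  set p := Lagrange.interpolate s id f with hp
  have hps : ∀ t ∈ spectrum ℝ b ∪ spectrum ℝ c, Polynomial.eval t p = f t := by
    intro t ht
    have := Lagrange.eval_interpolate_at_node (v := id) (r := f)
      (Set.injOn_id _) ((hfb.union hfc).mem_toFinset.mpr ht)
    exact this
  have e1 : CFC.sqrt b = Polynomial.aeval b p := by
    rw [CFC.sqrt_eq_cfc, cfc_nnreal_eq_real (ha := hb), ← cfc_polynomial p b]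
    exact cfc_congr fun t ht => (hps t (Or.inl ht)).symm
  have e2 : CFC.sqrt c = Polynomial.aeval c p := by
    rw [CFC.sqrt_eq_cfc, cfc_nnreal_eq_real (ha := hc), ← cfc_polynomial p c]
    exact cfc_congr fun t ht => (hps t (Or.inr ht)).symm
  rw [e1, e2]
  exact semiconj_aeval h p

lemma one_sub_star_mul_self_nonneg {T : E →L[ℂ] E} (hT : ‖T‖ < 1) :
    0 ≤ 1 - star T * T := by
  have h0 : (0 : E →L[ℂ] E) ≤ star T * T := star_mul_self_nonneg T
  have hn : ‖star T * T‖ ≤ 1 := by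
    calc ‖star T * T‖ = ‖T‖ * ‖T‖ := by
          rw [ContinuousLinearMap.star_eq_adjoint]
          exact ContinuousLinearMap.norm_adjoint_comp_self T
      _ ≤ 1 := by nlinarith [norm_nonneg T]
  have := (CStarAlgebra.norm_le_one_iff_of_nonneg (star T * T) h0).mp hn
  exact sub_nonneg.mpr this

lemma isUnit_one_sub_star_mul_self {T : E →L[ℂ] E} (hT : ‖T‖ < 1) :
    IsUnit (1 - star T * T) := by
  apply isUnit_one_sub_of_norm_lt_one
  calc ‖star T * T‖ = ‖T‖ * ‖T‖ := by
        rw [ContinuousLinearMap.star_eq_adjoint]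
        exact ContinuousLinearMap.norm_adjoint_comp_self T
    _ < 1 := by nlinarith [norm_nonneg T]

lemma isUnit_sqrt {b : E →L[ℂ] E} (hb : 0 ≤ b) (hu : IsUnit b) : IsUnit (CFC.sqrt b) := by
  have hsq : CFC.sqrt b * CFC.sqrt b = b := CFC.sqrt_mul_sqrt_self b hb
  set t := CFC.sqrt b with ht
  obtain ⟨u, hu'⟩ := hu
  have h1 : (↑u⁻¹ : E →L[ℂ] E) * b = 1 := by rw [← hu']; exact u.inv_mul
  have h2 : b * (↑u⁻¹ : E →L[ℂ] E) = 1 := by rw [← hu']; exact u.mul_inv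
  have hcomm : t * b = b * t := by rw [← hsq]; noncomm_ring
  have hcu : t * (↑u⁻¹ : E →L[ℂ] E) = ↑u⁻¹ * t := by
    calc t * (↑u⁻¹ : E →L[ℂ] E) = ↑u⁻¹ * b * t * ↑u⁻¹ := by rw [h1, one_mul]
      _ = ↑u⁻¹ * (t * b) * ↑u⁻¹ := by rw [mul_assoc _ b t, ← hcomm]
      _ = ↑u⁻¹ * t * (b * ↑u⁻¹) := by noncomm_ring
      _ = ↑u⁻¹ * t := by rw [h2, mul_one]
  refine isUnit_iff_exists.mpr ⟨t * ↑u⁻¹, ?_, ?_⟩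
  · rw [← mul_assoc, hsq]; exact h2
  · rw [hcu, mul_assoc, hsq]; exact h1

end Aux

open ContinuousLinearMap in
/-- For a strict contraction `Γ` and `θ` with `I + θΓ*` invertible, setting
`θ₀ = D_{Γ*}(I + θΓ*)⁻¹(θ + Γ)D_Γ⁻¹`, the identity
`D_{Γ*}⁻¹(I - Γ) + θ D_Γ⁻¹(Γ* - I) = (I + θΓ*) D_{Γ*}⁻¹ (I - θ₀)` holds. -/
theorem stmt18 {d : ℕ}
    (Γ θ θ0 : EuclideanSpace ℂ (Fin d) →L[ℂ] EuclideanSpace ℂ (Fin d))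
    (hΓ : ‖Γ‖ < 1) (hunit : IsUnit (1 + θ * adjoint Γ))
    (hθ0 : θ0 = defectOp (adjoint Γ) * Ring.inverse (1 + θ * adjoint Γ) *
        (θ + Γ) * Ring.inverse (defectOp Γ)) :
    Ring.inverse (defectOp (adjoint Γ)) * (1 - Γ) +
        θ * Ring.inverse (defectOp Γ) * (adjoint Γ - 1) =
      (1 + θ * adjoint Γ) * Ring.inverse (defectOp (adjoint Γ)) * (1 - θ0) := by
  have hΓs : ‖adjoint Γ‖ < 1 := by rwa [ContinuousLinearMap.adjoint.norm_map Γ]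
  -- the two defect operators
  set D := defectOp Γ with hD_def
  set Ds := defectOp (adjoint Γ) with hDs_def
  have hb_eq : defectOp Γ = CFC.sqrt (1 - star Γ * Γ) := by
    rw [defectOp, star_eq_adjoint]
  have hc_eq : defectOp (adjoint Γ) = CFC.sqrt (1 - star (adjoint Γ) * adjoint Γ) := by
    rw [defectOp, star_eq_adjoint]
  have hb0 : (0 : _) ≤ 1 - star Γ * Γ := one_sub_star_mul_self_nonneg hΓ
  have hc0 : (0 : _) ≤ 1 - star (adjoint Γ) * adjoint Γ := one_sub_star_mul_self_nonneg hΓs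
  have hbu : IsUnit (1 - star Γ * Γ) := isUnit_one_sub_star_mul_self hΓ
  have hcu : IsUnit (1 - star (adjoint Γ) * adjoint Γ) := isUnit_one_sub_star_mul_self hΓs
  have hD : IsUnit D := by rw [hD_def, hb_eq]; exact isUnit_sqrt hb0 hbu
  have hDs : IsUnit Ds := by rw [hDs_def, hc_eq]; exact isUnit_sqrt hc0 hcu
  have hDsa : IsSelfAdjoint D := by
    rw [hD_def, hb_eq]; exact IsSelfAdjoint.of_nonneg (CFC.sqrt_nonneg (1 - star Γ * Γ))
  have hDssa : IsSelfAdjoint Ds := by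
    rw [hDs_def, hc_eq]; exact IsSelfAdjoint.of_nonneg (CFC.sqrt_nonneg (1 - star (adjoint Γ) * adjoint Γ))
  -- intertwining relation
  have hsemi : Γ * D = Ds * Γ := by
    rw [hD_def, hDs_def, hb_eq, hc_eq]
    apply semiconj_sqrt hb0 hc0
    have h1 : star (adjoint Γ) = Γ := by rw [star_eq_adjoint, adjoint_adjoint]
    rw [h1, star_eq_adjoint]
    simp only [mul_sub, sub_mul, mul_one, one_mul, mul_assoc]
  have hadj : D * adjoint Γ = adjoint Γ * Ds := by
    have h := congrArg star hsemi
    rwa [star_mul, star_mul, hDsa.star_eq, hDssa.star_eq, star_eq_adjoint] at h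
  -- inverse intertwining relations
  have hh1 : Ring.inverse Ds * Γ = Γ * Ring.inverse D := by
    calc Ring.inverse Ds * Γ = Ring.inverse Ds * Γ * (D * Ring.inverse D) := by
          rw [Ring.mul_inverse_cancel D hD, mul_one]
      _ = Ring.inverse Ds * (Γ * D) * Ring.inverse D := by noncomm_ring
      _ = Ring.inverse Ds * Ds * Γ * Ring.inverse D := by rw [hsemi, ← mul_assoc]
      _ = Γ * Ring.inverse D := by rw [Ring.inverse_mul_cancel Ds hDs, one_mul]
  have hh2 : Ring.inverse D * adjoint Γ = adjoint Γ * Ring.inverse Ds := by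
    calc Ring.inverse D * adjoint Γ
        = Ring.inverse D * adjoint Γ * (Ds * Ring.inverse Ds) := by
          rw [Ring.mul_inverse_cancel Ds hDs, mul_one]
      _ = Ring.inverse D * (adjoint Γ * Ds) * Ring.inverse Ds := by noncomm_ring
      _ = Ring.inverse D * D * adjoint Γ * Ring.inverse Ds := by rw [← hadj, ← mul_assoc]
      _ = adjoint Γ * Ring.inverse Ds := by rw [Ring.inverse_mul_cancel D hD, one_mul]
  -- simplify the right-hand side
  have e : Ring.inverse Ds * θ0 =
      Ring.inverse (1 + θ * adjoint Γ) * ((θ + Γ) * Ring.inverse D) := by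
    rw [hθ0]
    rw [show Ds * Ring.inverse (1 + θ * adjoint Γ) * (θ + Γ) * Ring.inverse D =
      Ds * (Ring.inverse (1 + θ * adjoint Γ) * ((θ + Γ) * Ring.inverse D)) by noncomm_ring]
    rw [← mul_assoc, Ring.inverse_mul_cancel Ds hDs, one_mul]
  have key : (1 + θ * adjoint Γ) * Ring.inverse Ds * (1 - θ0) =
      (1 + θ * adjoint Γ) * Ring.inverse Ds - (θ + Γ) * Ring.inverse D := by
    calc (1 + θ * adjoint Γ) * Ring.inverse Ds * (1 - θ0)
        = (1 + θ * adjoint Γ) * Ring.inverse Ds -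
          (1 + θ * adjoint Γ) * (Ring.inverse Ds * θ0) := by
          rw [mul_sub, mul_one, mul_assoc]
      _ = (1 + θ * adjoint Γ) * Ring.inverse Ds -
          ((1 + θ * adjoint Γ) * Ring.inverse (1 + θ * adjoint Γ)) *
            ((θ + Γ) * Ring.inverse D) := by rw [e, ← mul_assoc]
      _ = (1 + θ * adjoint Γ) * Ring.inverse Ds - (θ + Γ) * Ring.inverse D := by
          rw [Ring.mul_inverse_cancel _ hunit, one_mul]
  calc Ring.inverse Ds * (1 - Γ) + θ * Ring.inverse D * (adjoint Γ - 1)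
      = Ring.inverse Ds - Ring.inverse Ds * Γ + θ * (Ring.inverse D * adjoint Γ) -
        θ * Ring.inverse D := by
          simp only [mul_sub, sub_mul, mul_one, one_mul, mul_assoc]; abel
    _ = Ring.inverse Ds - Γ * Ring.inverse D + θ * (adjoint Γ * Ring.inverse Ds) -
        θ * Ring.inverse D := by rw [hh1, hh2]
    _ = (1 + θ * adjoint Γ) * Ring.inverse Ds - (θ + Γ) * Ring.inverse D := by
          simp only [add_mul, one_mul, mul_assoc]; abel
    _ = (1 + θ * adjoint Γ) * Ring.inverse Ds * (1 - θ0) := key.symm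
end
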